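/- For every integer n ≥ 1 the following identity holds in the field ℚ(q): ∑_{j=1}^{n} ( (−1)ʲ·(q−q⁻¹)^{j−1} / j! ) · ∑_{(k₁,…,k_j)} ∏_{i=1}^{j} [2k_i]/k_i = (1−q⁴) / ( q^{2n}·(q−q⁻¹) ), where the inner sum runs over all j-tuples (k₁,…,k_j) of positive integers with k₁+⋯+k_j = n. -/

import Mathlib

noncomputable section

/-- `K = ℚ(q)`, the field of rational functions over `ℚ` in the indeterminate `q`. -/
abbrev K : Type := RatFunc ℚ

/-- The indeterminate `q`. -/
def q : K := RatFunc.X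

/-- The quantum integer `[n] = (qⁿ - q⁻ⁿ)/(q - q⁻¹)`. -/
def qint (n : ℤ) : K := (q ^ n - q ^ (-n)) / (q - q⁻¹)

/-!
Put `c = q - q⁻¹` and `F = ∑_{k ≥ 1} [2k]/k Xᵏ`. Since `-c [2k] = q⁻²ᵏ - q²ᵏ`, the series `ψ = -c F`
is `log ((1 - q² X) / (1 - q⁻² X))`; the inner sums are coefficients of the powers of `F`, so the
left-hand side is `c⁻¹` times the coefficient of `Xⁿ` in `exp ψ = (1 - q² X) / (1 - q⁻² X)`, namely
`q⁻²ⁿ (1 - q⁴)`. The exponential identity needs no logarithms: both sides `G` solve `G' = ψ' G`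
with `G(0) = 1`, and this linear differential equation determines a power series from its
constant term.
-/

open PowerSeries Finset

namespace PowerSeries

variable {R : Type*}

theorem coeff_pow_eq_sum_antidiagonalTuple [CommSemiring R] (φ : R⟦X⟧) (j n : ℕ) :
    coeff n (φ ^ j) = ∑ k ∈ Nat.antidiagonalTuple j n, ∏ i, coeff (k i) φ := by
  rw [← Fin.prod_const, coeff_prod, finsuppAntidiag, sum_map,
    ← piAntidiag_univ_fin_eq_antidiagonalTuple]
  exact sum_attach (piAntidiag univ n) fun k : Fin j → ℕ => ∏ i, coeff (k i) φ

theorem coeff_mk_pow_eq_sum_filter_antidiagonalTuple [CommSemiring R] {f : ℕ → R} (hf : f 0 = 0)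
    (j n : ℕ) :
    coeff n (mk f ^ j) =
      ∑ k ∈ (Nat.antidiagonalTuple j n).filter (fun k => ∀ i, k i ≠ 0), ∏ i, f (k i) := by
  rw [coeff_pow_eq_sum_antidiagonalTuple, sum_filter_of_ne]
  · simp only [coeff_mk]
  · intro k _ hk i hi
    exact hk (prod_eq_zero (mem_univ i) (by rw [hi, hf]))

theorem coeff_pow_eq_zero_of_lt [CommSemiring R] {φ : R⟦X⟧} (hφ : constantCoeff φ = 0)
    {m j : ℕ} (h : m < j) : coeff m (φ ^ j) = 0 :=
  X_pow_dvd_iff.1 (pow_dvd_pow_of_dvd (X_dvd_iff.2 hφ) j) m h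

theorem eq_of_derivative_eq_mul [CommRing R] [IsAddTorsionFree R] {D f g : R⟦X⟧}
    (hf : d⁄dX R f = D * f) (hg : d⁄dX R g = D * g) (h0 : constantCoeff f = constantCoeff g) :
    f = g := by
  ext n
  induction n using Nat.strong_induction_on with
  | _ n ih =>
  cases n with
  | zero => simpa using h0
  | succ n =>
    have hD : coeff n (d⁄dX R f) = coeff n (d⁄dX R g) := by
      rw [hf, hg, coeff_mul, coeff_mul]
      refine sum_congr rfl fun p hp => ?_
      rw [ih p.2 (by have := mem_antidiagonal.1 hp; omega)]
    rw [coeff_derivative, coeff_derivative, ← Nat.cast_succ, mul_comm, ← nsmul_eq_mul, mul_comm,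
      ← nsmul_eq_mul] at hD
    exact (smul_right_inj n.succ_ne_zero).1 hD

section Exp

variable [CommRing R] [Algebra ℚ R] {φ : R⟦X⟧}

theorem coeff_exp_subst (hφ : constantCoeff φ = 0) (n : ℕ) :
    coeff n ((exp R).subst φ) =
      ∑ j ∈ range (n + 1), algebraMap ℚ R (1 / j.factorial) * coeff n (φ ^ j) := by
  rw [coeff_subst' (HasSubst.of_constantCoeff_zero' hφ),
    finsum_eq_sum_of_support_subset _ (s := range (n + 1))]
  · simp only [coeff_exp, smul_eq_mul]
  · intro j hj
    by_contra hjn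
    simp only [coe_range, Set.mem_Iio, not_lt] at hjn
    simp [coeff_pow_eq_zero_of_lt hφ (Nat.lt_of_succ_le hjn)] at hj

theorem coeff_exp_subst_of_ne_zero (hφ : constantCoeff φ = 0) {n : ℕ} (hn : n ≠ 0) :
    coeff n ((exp R).subst φ) =
      ∑ j ∈ Icc 1 n, algebraMap ℚ R (1 / j.factorial) * coeff n (φ ^ j) := by
  rw [coeff_exp_subst hφ]
  refine (sum_subset (fun j hj => by simp at hj ⊢; omega) fun j hj hj' => ?_).symm
  obtain rfl : j = 0 := by simp at hj hj'; omega
  simp [hn]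

theorem derivative_exp_subst (hφ : constantCoeff φ = 0) :
    d⁄dX R ((exp R).subst φ) = d⁄dX R φ * (exp R).subst φ := by
  rw [derivative_subst (HasSubst.of_constantCoeff_zero' hφ), derivative_exp, mul_comm]

theorem constantCoeff_exp_subst (hφ : constantCoeff φ = 0) :
    constantCoeff ((exp R).subst φ) = 1 := by
  rw [← coeff_zero_eq_constantCoeff_apply, coeff_exp_subst hφ]
  simp

end Exp

section Geometric

variable [CommRing R] (a : R)

theorem mk_pow_mul_one_sub_C_mul_X : mk (a ^ ·) * (1 - C a * X) = 1 := by
  simpa [rescale_mk] using congrArg (rescale a) (mk_one_mul_one_sub_eq_one (S := R))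

theorem derivative_mk_pow : d⁄dX R (mk (a ^ ·)) = C a * mk (a ^ ·) ^ 2 := by
  ext n
  have hterm : ∀ p ∈ antidiagonal n, coeff p.1 (mk (a ^ ·)) * coeff p.2 (mk (a ^ ·)) = a ^ n :=
    fun p hp => by rw [coeff_mk, coeff_mk, ← pow_add, mem_antidiagonal.1 hp]
  rw [coeff_derivative, coeff_C_mul, pow_two, coeff_mul, sum_congr rfl hterm, sum_const,
    Nat.card_antidiagonal, coeff_mk, nsmul_eq_mul]
  push_cast
  ring

theorem coeff_succ_one_sub_C_mul_X_mul_mk_pow (b : R) (n : ℕ) :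
    coeff (n + 1) ((1 - C b * X) * mk (a ^ ·)) = a ^ (n + 1) - b * a ^ n := by
  simp [sub_mul, mul_assoc, coeff_succ_X_mul]

end Geometric

section LogRatio

variable [Field R] [CharZero R] (a b : R)

/-- The series `log ((1 - b X) / (1 - a X))`. -/
def logRatio : R⟦X⟧ := mk fun k => (a ^ k - b ^ k) / k

theorem constantCoeff_logRatio : constantCoeff (logRatio a b) = 0 := by
  rw [← coeff_zero_eq_constantCoeff_apply, logRatio, coeff_mk]
  simp

theorem derivative_logRatio :
    d⁄dX R (logRatio a b) = C a * mk (a ^ ·) - C b * mk (b ^ ·) := by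
  ext n
  rw [logRatio, coeff_derivative, coeff_mk, map_sub, coeff_C_mul, coeff_C_mul, coeff_mk, coeff_mk,
    Nat.cast_add_one, div_mul_cancel₀ _ (Nat.cast_add_one_ne_zero n), pow_succ', pow_succ']

theorem exp_subst_logRatio : (exp R).subst (logRatio a b) = (1 - C b * X) * mk (a ^ ·) := by
  have hψ := constantCoeff_logRatio a b
  refine eq_of_derivative_eq_mul (derivative_exp_subst hψ) ?_
    (by simp [constantCoeff_exp_subst hψ])
  rw [Derivation.leibniz, derivative_mk_pow, derivative_logRatio]
  simp only [map_sub, Derivation.leibniz, derivative_X, derivative_C, Derivation.map_one_eq_zero,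
    smul_eq_mul]
  linear_combination (C b * mk (a ^ ·)) * mk_pow_mul_one_sub_C_mul_X b

end LogRatio

end PowerSeries

theorem q_sub_q_inv_ne_zero : q - q⁻¹ ≠ 0 := by
  intro h
  have hq : q ^ 2 = 1 := by
    rw [sub_eq_zero] at h
    rw [pow_two]
    nth_rewrite 2 [h]
    exact mul_inv_cancel₀ RatFunc.X_ne_zero
  have hX : (Polynomial.X ^ 2 : Polynomial ℚ) = 1 := by
    apply IsFractionRing.injective (Polynomial ℚ) K
    rw [map_pow, map_one, RatFunc.algebraMap_X]
    exact hq
  simpa using congrArg Polynomial.natDegree hX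

theorem neg_mul_qint_two_mul (k : ℕ) :
    -(q - q⁻¹) * qint (2 * k) = ((q ^ 2)⁻¹) ^ k - (q ^ 2) ^ k := by
  have hpow : q ^ (2 * (k : ℤ)) = (q ^ 2) ^ k := by
    rw [zpow_mul, zpow_natCast, zpow_ofNat]
  rw [qint, neg_mul, mul_div_cancel₀ _ q_sub_q_inv_ne_zero, zpow_neg, hpow, inv_pow]
  ring

theorem neg_smul_mk_qint_two_mul_div :
    -(q - q⁻¹) • mk (fun k : ℕ => qint (2 * (k : ℤ)) / (k : K)) =
      logRatio (q ^ 2)⁻¹ (q ^ 2) := by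
  ext k
  rw [logRatio, coeff_smul, coeff_mk, coeff_mk, smul_eq_mul, ← mul_div_assoc,
    neg_mul_qint_two_mul]

theorem summand_eq_coeff_pow_logRatio {j : ℕ} (hj : 1 ≤ j) (n : ℕ) :
    (-1 : K) ^ j * (q - q⁻¹) ^ (j - 1) / (j.factorial : K) *
        ∑ k ∈ (Nat.antidiagonalTuple j n).filter (fun k => ∀ i, k i ≠ 0),
          ∏ i, qint (2 * (k i : ℤ)) / ((k i : K)) =
      (q - q⁻¹)⁻¹ *
        (algebraMap ℚ K (1 / j.factorial) * coeff n (logRatio (q ^ 2)⁻¹ (q ^ 2) ^ j)) := by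
  obtain ⟨i, rfl⟩ := Nat.exists_eq_add_of_le' hj
  have hc := q_sub_q_inv_ne_zero
  rw [← coeff_mk_pow_eq_sum_filter_antidiagonalTuple
      (f := fun k : ℕ => qint (2 * (k : ℤ)) / (k : K)) (by simp),
    ← neg_smul_mk_qint_two_mul_div, smul_pow, coeff_smul, smul_eq_mul, map_div₀, map_one,
    map_natCast, neg_pow, Nat.add_sub_cancel]
  generalize q - q⁻¹ = c at hc ⊢
  field_simp
  ring

/-- For every `n ≥ 1`:
`∑_{j=1}^{n} ((−1)ʲ (q−q⁻¹)^{j−1}/j!) ∑_{k₁+⋯+k_j = n, kᵢ ≥ 1} ∏ᵢ [2kᵢ]/kᵢ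
  = (1−q⁴)/(q^{2n}(q−q⁻¹))`. -/
theorem stmt3 (n : ℕ) (hn : 1 ≤ n) :
    ∑ j ∈ Finset.Icc 1 n,
        ((-1 : K) ^ j * (q - q⁻¹) ^ (j - 1) / (j.factorial : K)) *
          ∑ k ∈ (Finset.Nat.antidiagonalTuple j n).filter (fun k => ∀ i, k i ≠ 0),
            ∏ i, qint (2 * (k i : ℤ)) / ((k i : K)) =
      (1 - q ^ 4) / (q ^ (2 * n) * (q - q⁻¹)) := by
  have hq : q ≠ 0 := RatFunc.X_ne_zero
  have hc := q_sub_q_inv_ne_zero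
  obtain ⟨m, rfl⟩ := Nat.exists_eq_add_of_le' hn
  rw [sum_congr rfl fun j hj => summand_eq_coeff_pow_logRatio (mem_Icc.1 hj).1 (m + 1), ← mul_sum,
    ← coeff_exp_subst_of_ne_zero (constantCoeff_logRatio _ _) m.succ_ne_zero, exp_subst_logRatio,
    coeff_succ_one_sub_C_mul_X_mul_mk_pow, inv_pow, inv_pow]
  field_simp
  ring
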